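/- arXiv:math/0607263 — 2 statements merged into one kernel-verified Lean document; each statement's English description precedes it below -/
import Mathlib

section
/- Surjective bimodule maps admit almost rank-preserving lifts: if φ : L → L' is a surjective A-linear map between M-bimodules, ξ' ∈ L', and ε > 0, then there exists ξ ∈ L with φ(ξ) = ξ' and [ξ] ≤ [ξ'] + ε. -/
/- Choose projections `p, q` realising `[ξ']` up to `ε` and put `e := (1 - p) ⊗ (1 - q)ᵒᵖ`, an idempotent
of `A` with `e • ξ' = 0`. For any preimage `ξ₀` of `ξ'`, the element `ξ := ξ₀ - e • ξ₀` is again a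
preimage, and `e • ξ = 0` because `e` is idempotent, so the same pair `p, q` witnesses `[ξ] ≤ [ξ'] + ε`. -/

set_option maxHeartbeats 1000000
set_option synthInstance.maxHeartbeats 1000000

noncomputable section

open scoped TensorProduct

namespace RankCompletion

variable {H : Type*} [NormedAddCommGroup H] [InnerProductSpace ℂ H] [CompleteSpace H]

instance : SMulMemClass (VonNeumannAlgebra H) ℂ (H →L[ℂ] H) where
  smul_mem {s} c a ha := by simpa using s.toStarSubalgebra.smul_mem ha c

/-- `p` is a projection in the von Neumann algebra `M`: `p = p*` and `p² = p`. -/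
def IsProj (M : VonNeumannAlgebra H) (p : M) : Prop :=
  star p = p ∧ p * p = p

/-- `τ` is a unital, tracial, positive, faithful and normal ℂ-linear functional on `M`. -/
structure IsFiniteTrace (M : VonNeumannAlgebra H) (τ : M →ₗ[ℂ] ℂ) : Prop where
  unital : τ 1 = 1
  tracial : ∀ x y : M, τ (x * y) = τ (y * x)
  pos_re : ∀ x : M, 0 ≤ (τ (star x * x)).re
  pos_im : ∀ x : M, (τ (star x * x)).im = 0
  faithful : ∀ x : M, τ (star x * x) = 0 → x = 0
  normal : ∀ (p : ℕ → M) (q : M), (∀ n, IsProj M (p n)) → IsProj M q →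
    (∀ i j, i ≠ j → p i * p j = 0) →
    (∀ v : H, Filter.Tendsto
        (fun n => (((∑ k ∈ Finset.range n, p k : M) : H →L[ℂ] H)) v)
        Filter.atTop (nhds ((q : H →L[ℂ] H) v))) →
    (τ q).re = ∑' n, (τ (p n)).re

/-- The algebraic tensor product `A = M ⊗_ℂ Mᵐᵒᵖ`; an `M`-bimodule is a left `A`-module. -/
abbrev BimodRing (M : VonNeumannAlgebra H) : Type _ := (↥M) ⊗[ℂ] (↥M)ᵐᵒᵖ

/-- The rank `[ξ]` of an element `ξ` of an `M`-bimodule `L`: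
the infimum of `re τ(p) + re τ(q)` over projections `p q` with `((1-p) ⊗ (1-q)ᵒᵖ) • ξ = 0`. -/
def rank (M : VonNeumannAlgebra H) (τ : M →ₗ[ℂ] ℂ) {L : Type*} [AddCommGroup L]
    [Module (BimodRing M) L] (ξ : L) : ℝ :=
  sInf { r : ℝ | ∃ p q : M, IsProj M p ∧ IsProj M q ∧
    (((1 - p) ⊗ₜ[ℂ] (MulOpposite.op (1 - q)) : BimodRing M)) • ξ = 0 ∧
    r = (τ p).re + (τ q).re }

theorem _root_.LinearMap.exists_eq_smul_eq_zero_of_isIdempotentElem {R N N' : Type*} [Semiring R]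
    [AddCommGroup N] [Module R N] [AddCommGroup N'] [Module R N'] (φ : N →ₗ[R] N') {e : R}
    (he : IsIdempotentElem e) {x : N} (hx : e • φ x = 0) : ∃ y, φ y = φ x ∧ e • y = 0 :=
  ⟨x - e • x, by rw [map_sub, map_smul, hx, sub_zero], by rw [smul_sub, smul_smul, he.eq, sub_self]⟩

theorem isIdempotentElem_tmul_op {R A B : Type*} [CommSemiring R] [Semiring A] [Semiring B]
    [Algebra R A] [Algebra R B] {a : A} {b : B} (ha : IsIdempotentElem a)
    (hb : IsIdempotentElem b) : IsIdempotentElem (a ⊗ₜ[R] MulOpposite.op b) := by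
  rw [IsIdempotentElem, Algebra.TensorProduct.tmul_mul_tmul, ← MulOpposite.op_mul, ha.eq, hb.eq]

section

variable {M : VonNeumannAlgebra H} {τ : M →ₗ[ℂ] ℂ} {L : Type*} [AddCommGroup L]
  [Module (BimodRing M) L]

theorem IsProj.one : IsProj M 1 :=
  ⟨star_one _, one_mul 1⟩

theorem IsProj.isIdempotentElem_one_sub {p : M} (hp : IsProj M p) : IsIdempotentElem (1 - p) :=
  IsIdempotentElem.one_sub hp.2

theorem IsProj.re_trace_nonneg (hτ : IsFiniteTrace M τ) {p : M} (hp : IsProj M p) :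
    0 ≤ (τ p).re := by
  simpa only [hp.1, hp.2] using hτ.pos_re p

theorem rank_le_of_smul_eq_zero (hτ : IsFiniteTrace M τ) {p q : M} (hp : IsProj M p)
    (hq : IsProj M q) {ξ : L}
    (hξ : (((1 - p) ⊗ₜ[ℂ] MulOpposite.op (1 - q) : BimodRing M)) • ξ = 0) :
    rank M τ ξ ≤ (τ p).re + (τ q).re := by
  refine csInf_le ⟨0, ?_⟩ ⟨p, q, hp, hq, hξ, rfl⟩
  rintro r ⟨p', q', hp', hq', -, rfl⟩
  exact add_nonneg (hp'.re_trace_nonneg hτ) (hq'.re_trace_nonneg hτ)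

theorem exists_isProj_smul_eq_zero_lt_rank_add (ξ : L) {ε : ℝ} (hε : 0 < ε) :
    ∃ p q : M, IsProj M p ∧ IsProj M q ∧
      (((1 - p) ⊗ₜ[ℂ] MulOpposite.op (1 - q) : BimodRing M)) • ξ = 0 ∧
      (τ p).re + (τ q).re < rank M τ ξ + ε := by
  have hne : { r : ℝ | ∃ p q : M, IsProj M p ∧ IsProj M q ∧
      (((1 - p) ⊗ₜ[ℂ] (MulOpposite.op (1 - q)) : BimodRing M)) • ξ = 0 ∧
      r = (τ p).re + (τ q).re }.Nonempty :=
    ⟨_, 1, 1, IsProj.one, IsProj.one, by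
      rw [sub_self, TensorProduct.zero_tmul]; exact Module.zero_smul ξ, rfl⟩
  obtain ⟨_, ⟨p, q, hp, hq, hξ, rfl⟩, hlt⟩ := Real.lt_sInf_add_pos hne hε
  exact ⟨p, q, hp, hq, hξ, hlt⟩

end

/-- Surjective bimodule maps admit almost rank-preserving lifts. -/
theorem exists_lift_rank_le (M : VonNeumannAlgebra H) (τ : M →ₗ[ℂ] ℂ)
    (hτ : IsFiniteTrace M τ)
    {L L' : Type*} [AddCommGroup L] [Module (BimodRing M) L]
    [AddCommGroup L'] [Module (BimodRing M) L']
    (φ : @LinearMap (BimodRing M) (BimodRing M) _ _ (RingHom.id _) L L' _ _ _ _) (hφ : Function.Surjective φ)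
    (ξ' : L') (ε : ℝ) (hε : 0 < ε) :
    ∃ ξ : L, φ ξ = ξ' ∧ rank M τ ξ ≤ rank M τ ξ' + ε := by
  obtain ⟨p, q, hp, hq, hξ', hlt⟩ := exists_isProj_smul_eq_zero_lt_rank_add (τ := τ) ξ' hε
  obtain ⟨ξ₀, rfl⟩ := hφ ξ'
  have he : IsIdempotentElem ((1 - p) ⊗ₜ[ℂ] MulOpposite.op (1 - q) : BimodRing M) :=
    isIdempotentElem_tmul_op hp.isIdempotentElem_one_sub hq.isIdempotentElem_one_sub
  obtain ⟨ξ, hφξ, hξ⟩ := φ.exists_eq_smul_eq_zero_of_isIdempotentElem he hξ'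
  exact ⟨ξ, hφξ, (rank_le_of_smul_eq_zero hτ hp hq hξ).trans hlt.le⟩

end RankCompletion
end
end

section
/- Left multiplication by a sum of n elementary tensors is n-Lipschitz in the rank metric: for every M-bimodule L, if ξ = Σ_{i=1}^{n} aᵢ ⊗ bᵢᵒᵖ ∈ A with aᵢ, bᵢ ∈ M, then [ξ • η] ≤ n·[η] for every η ∈ L. -/
/- Common setup: a von Neumann algebra `M` acting on a complex Hilbert space `H`,
a positive faithful normal unital trace `τ`, the algebraic tensor product
`A := M ⊗[ℂ] Mᵐᵒᵖ`, bimodules as left `A`-modules and the rank `[ξ]` of an element. -/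

set_option maxHeartbeats 1000000
set_option synthInstance.maxHeartbeats 1000000

noncomputable section

open scoped TensorProduct

namespace RankCompletion

variable {H : Type*} [NormedAddCommGroup H] [InnerProductSpace ℂ H] [CompleteSpace H]

/-!
If `((1 - p) ⊗ (1 - q)ᵒᵖ) • η = 0`, then `((1 - P) ⊗ (1 - Q)ᵒᵖ) • (ξ • η) = 0` as soon as `P`
fixes every `aᵢ p` and `Q` fixes every `bᵢ* q`, because then `(1 - P) aᵢ = (1 - P) aᵢ (1 - p)` and
`bᵢ (1 - Q) = (1 - q) bᵢ (1 - Q)`. Such a `P` is obtained by adjoining left support projections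
one at a time, `P' = P + l((1 - P) aᵢ p)`. With the polar decomposition `x = v |x|`, where `v ∈ M`
because it commutes with the commutant, `τ (l x) = τ (v v*) = τ (v* v) = τ (r x) ≤ τ p` whenever
`x p = x`; hence `τ P ≤ n τ p` and `τ Q ≤ n τ q`, and the bound passes to the infimum.
-/

theorem star_mul_self_eq_iff_norm_apply_eq {a b : H →L[ℂ] H} :
    star a * a = star b * b ↔ ∀ ζ, ‖a ζ‖ = ‖b ζ‖ := by
  have key (c : H →L[ℂ] H) (ζ : H) : inner ℂ ((star c * c) ζ) ζ = (‖c ζ‖ ^ 2 : ℂ) := by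
    rw [ContinuousLinearMap.star_eq_adjoint, mul_apply_eq_comp,
      ContinuousLinearMap.adjoint_inner_left, inner_self_eq_norm_sq_to_K]
    rfl
  constructor
  · intro h ζ
    have := key a ζ
    rw [h, key b ζ] at this
    exact (sq_eq_sq₀ (norm_nonneg _) (norm_nonneg _)).mp (by exact_mod_cast this.symm)
  · intro h
    rw [← sub_eq_zero, ← ContinuousLinearMap.coe_inj, ContinuousLinearMap.toLinearMap_zero,
      ← inner_map_self_eq_zero]
    intro ζ
    simp only [ContinuousLinearMap.toLinearMap_sub, LinearMap.sub_apply,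
      ContinuousLinearMap.coe_coe, inner_sub_left, key, h, sub_self]

section PolarDecomposition

variable (x : H →L[ℂ] H)

theorem norm_abs_apply (ζ : H) : ‖CFC.abs x ζ‖ = ‖x ζ‖ :=
  star_mul_self_eq_iff_norm_apply_eq.mp
    (by rw [(CFC.abs_nonneg x).isSelfAdjoint.star_eq, CFC.abs_mul_abs]) ζ

abbrev initialSpace : Submodule ℂ H := (CFC.abs x).range.topologicalClosure

def absToInitialSpace : H →ₗ[ℂ] initialSpace x :=
  (CFC.abs x).toLinearMap.codRestrict (initialSpace x) fun ζ =>
    Submodule.le_topologicalClosure _ (LinearMap.mem_range_self _ ζ)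

theorem denseRange_absToInitialSpace : DenseRange (absToInitialSpace x) := by
  rw [DenseRange, Subtype.dense_iff, ← Set.range_comp]
  exact (Submodule.topologicalClosure_coe _).subset

/-- `|x| ζ ↦ x ζ` is isometric, so it extends from the range of `|x|` to its closure; the polar
part is this extension, taken to be zero on the orthogonal complement. -/
def polarPart : H →L[ℂ] H :=
  ((x : H →ₗ[ℂ] H).extendOfNorm (absToInitialSpace x)).comp
    (initialSpace x).orthogonalProjectionOnto

theorem extendOfNorm_absToInitialSpace (ζ : H) :
    (x : H →ₗ[ℂ] H).extendOfNorm (absToInitialSpace x) (absToInitialSpace x ζ) = x ζ :=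
  LinearMap.extendOfNorm_eq (denseRange_absToInitialSpace x)
    ⟨1, fun ζ => by simp [absToInitialSpace, norm_abs_apply]⟩ ζ

theorem polarPart_mul_abs : polarPart x * CFC.abs x = x := by
  ext ζ
  have h : (initialSpace x).orthogonalProjectionOnto (CFC.abs x ζ) = absToInitialSpace x ζ :=
    Submodule.orthogonalProjectionOnto_mem_subspace_eq_self (absToInitialSpace x ζ)
  rw [mul_apply_eq_comp, polarPart, ContinuousLinearMap.comp_apply, h,
    extendOfNorm_absToInitialSpace]

theorem polarPart_mul_starProjection :
    polarPart x * (initialSpace x).starProjection = polarPart x := by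
  ext ζ
  rw [mul_apply_eq_comp, polarPart, ContinuousLinearMap.comp_apply,
    ContinuousLinearMap.comp_apply, Submodule.starProjection_apply,
    Submodule.orthogonalProjectionOnto_mem_subspace_eq_self]

theorem norm_polarPart_apply (ζ : H) :
    ‖polarPart x ζ‖ = ‖(initialSpace x).starProjection ζ‖ := by
  have isometric (k : initialSpace x) :
      ‖(x : H →ₗ[ℂ] H).extendOfNorm (absToInitialSpace x) k‖ = ‖k‖ := by
    refine (denseRange_absToInitialSpace x).induction_on k
      (isClosed_eq (by fun_prop) continuous_norm) fun ζ => ?_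
    rw [extendOfNorm_absToInitialSpace, ← norm_abs_apply]
    rfl
  exact isometric _

theorem star_polarPart_mul_self :
    star (polarPart x) * polarPart x = (initialSpace x).starProjection := by
  have hP := isStarProjection_starProjection (U := initialSpace x)
  calc star (polarPart x) * polarPart x
      = star (initialSpace x).starProjection * (initialSpace x).starProjection :=
        star_mul_self_eq_iff_norm_apply_eq.mpr (norm_polarPart_apply x)
    _ = (initialSpace x).starProjection := by
        rw [hP.isSelfAdjoint.star_eq, hP.isIdempotentElem.eq]

theorem starProjection_mul_abs : (initialSpace x).starProjection * CFC.abs x = CFC.abs x := by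
  ext ζ
  exact Submodule.starProjection_eq_self_iff.mpr
    (Submodule.le_topologicalClosure _ (LinearMap.mem_range_self _ ζ))

theorem abs_mul_starProjection : CFC.abs x * (initialSpace x).starProjection = CFC.abs x := by
  simpa [star_mul, (CFC.abs_nonneg x).isSelfAdjoint.star_eq,
    isSelfAdjoint_starProjection (initialSpace x) |>.star_eq] using
    congr(star $(starProjection_mul_abs x))

theorem mul_starProjection_eq_zero {z : H →L[ℂ] H} (hz : z * CFC.abs x = 0) :
    z * (initialSpace x).starProjection = 0 := by
  have hK : initialSpace x ≤ z.ker := by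
    refine Submodule.topologicalClosure_minimal _ ?_ z.isClosed_ker
    rintro _ ⟨ζ, rfl⟩
    exact congr($hz ζ)
  ext ζ
  exact hK (Submodule.starProjection_apply (initialSpace x) ζ ▸ Submodule.coe_mem _)

theorem starProjection_mul_eq_zero {z : H →L[ℂ] H} (hz : CFC.abs x * z = 0) :
    (initialSpace x).starProjection * z = 0 := by
  have h := mul_starProjection_eq_zero x (z := star z)
    (by rw [← (CFC.abs_nonneg x).isSelfAdjoint.star_eq, ← star_mul, hz, star_zero])
  simpa [star_mul, isSelfAdjoint_starProjection (initialSpace x) |>.star_eq] using congr(star $h)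

theorem commute_polarPart {u : H →L[ℂ] H} (h₁ : Commute x u) (h₂ : Commute (star x) u) :
    Commute (polarPart x) u := by
  have hvP := polarPart_mul_starProjection x
  have hvabs := polarPart_mul_abs x
  have hPabs := abs_mul_starProjection x
  set v := polarPart x
  set P := (initialSpace x).starProjection
  have habs : Commute (CFC.abs x) u := h₁.cfcAbs_left (by simpa using h₂.star_star)
  -- `u * v` and `v * u` agree on the range of `|x|`, hence on its closure ...
  have hP : u * v * P = v * u * P := by
    rw [← sub_eq_zero, ← sub_mul]
    refine mul_starProjection_eq_zero x ?_
    rw [sub_mul, mul_assoc, hvabs, mul_assoc, ← habs.eq, ← mul_assoc, hvabs, h₁.eq, sub_self]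
  -- ... and `u` maps the kernel of `|x|`, on which `v` vanishes, into itself.
  have hker : v * (u * (1 - P)) = 0 := by
    have h : P * (u * (1 - P)) = 0 := starProjection_mul_eq_zero x (by
      rw [← mul_assoc, habs.eq, mul_assoc, mul_sub, mul_one, hPabs, sub_self, mul_zero])
    rw [← hvP, mul_assoc, h, mul_zero]
  calc v * u = v * u * P + v * (u * (1 - P)) := by noncomm_ring
    _ = u * (v * P) := by rw [hker, add_zero, ← hP, mul_assoc]
    _ = u * v := by rw [hvP]

theorem polarPart_mul_star_mul_self :
    polarPart x * star (polarPart x) * polarPart x = polarPart x := by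
  rw [mul_assoc, star_polarPart_mul_self, polarPart_mul_starProjection]

theorem polarPart_mul_star_mul : polarPart x * star (polarPart x) * x = x := by
  calc polarPart x * star (polarPart x) * x
      = polarPart x * star (polarPart x) * (polarPart x * CFC.abs x) := by rw [polarPart_mul_abs]
    _ = x := by rw [← mul_assoc, polarPart_mul_star_mul_self, polarPart_mul_abs]

theorem mul_polarPart_eq_zero {y : H →L[ℂ] H} (h : y * x = 0) : y * polarPart x = 0 := by
  rw [← polarPart_mul_starProjection, ← mul_assoc]
  exact mul_starProjection_eq_zero x (by rw [mul_assoc, polarPart_mul_abs, h])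

theorem polarPart_mul_eq_zero {z : H →L[ℂ] H} (h : x * z = 0) : polarPart x * z = 0 := by
  have habs : CFC.abs x * z = 0 := by
    rw [← starProjection_mul_abs, ← star_polarPart_mul_self, mul_assoc, mul_assoc,
      ← mul_assoc (polarPart x), polarPart_mul_abs, h, mul_zero]
  rw [← polarPart_mul_starProjection, mul_assoc, starProjection_mul_eq_zero x habs, mul_zero]

theorem polarPart_mem {M : VonNeumannAlgebra H} (hx : x ∈ M) : polarPart x ∈ M := by
  rw [← SetLike.mem_coe, ← M.centralizer_centralizer, Set.mem_centralizer_iff]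
  intro u hu
  rw [Set.mem_centralizer_iff] at hu
  exact (commute_polarPart x (hu x hx) (hu _ (star_mem hx))).eq.symm

end PolarDecomposition

section Trace

variable {M : VonNeumannAlgebra H} {τ : M →ₗ[ℂ] ℂ}

theorem isProj_iff_isStarProjection {p : M} : IsProj M p ↔ IsStarProjection p :=
  ⟨fun h => ⟨h.2, h.1⟩, fun h => ⟨h.2, h.1⟩⟩

theorem IsFiniteTrace.re_nonneg (hτ : IsFiniteTrace M τ) {p : M} (hp : IsStarProjection p) :
    0 ≤ (τ p).re := by
  simpa [hp.isSelfAdjoint.star_eq, hp.isIdempotentElem.eq] using hτ.pos_re p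

theorem IsFiniteTrace.re_le_of_mul_eq (hτ : IsFiniteTrace M τ) {p r : M}
    (hp : IsStarProjection p) (hr : IsStarProjection r) (hrp : r * p = r) :
    (τ r).re ≤ (τ p).re := by
  have := hτ.re_nonneg (hr.sub_of_mul_eq_left hp hrp)
  rw [map_sub, Complex.sub_re] at this
  linarith

theorem IsFiniteTrace.exists_leftSupport_trace_le (hτ : IsFiniteTrace M τ) {x p : M}
    (hp : IsStarProjection p) (hxp : x * p = x) :
    ∃ e : M, IsStarProjection e ∧ e * x = x ∧ (∀ y : M, y * x = 0 → y * e = 0) ∧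
      (τ e).re ≤ (τ p).re := by
  let v : M := ⟨polarPart (x : H →L[ℂ] H), polarPart_mem _ x.2⟩
  have hv : v * star v * v = v := Subtype.ext (polarPart_mul_star_mul_self _)
  have hl : IsStarProjection (v * star v) :=
    ⟨by rw [IsIdempotentElem, ← mul_assoc, hv], .mul_star_self v⟩
  have hr : IsStarProjection (star v * v) :=
    ⟨by rw [IsIdempotentElem, mul_assoc, ← mul_assoc v, hv], .star_mul_self v⟩
  have hvp : v * p = v := by
    have hx : x * (1 - p) = 0 := by rw [mul_sub, mul_one, hxp, sub_self]
    have : v * (1 - p) = 0 := Subtype.ext (polarPart_mul_eq_zero _ congr(Subtype.val $hx))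
    rwa [mul_sub, mul_one, sub_eq_zero, eq_comm] at this
  refine ⟨v * star v, hl, Subtype.ext (polarPart_mul_star_mul _), fun y hy => ?_, ?_⟩
  · have : y * v = 0 := Subtype.ext (mul_polarPart_eq_zero _ congr(Subtype.val $hy))
    rw [← mul_assoc, this, zero_mul]
  · rw [hτ.tracial]
    exact hτ.re_le_of_mul_eq hp hr (by rw [mul_assoc, hvp])

theorem IsFiniteTrace.exists_enlarge_trace_le_add (hτ : IsFiniteTrace M τ) {E x p : M}
    (hE : IsStarProjection E) (hp : IsStarProjection p) (hxp : x * p = x) :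
    ∃ E' : M, IsStarProjection E' ∧ E' * E = E ∧ E' * x = x ∧
      (τ E').re ≤ (τ E).re + (τ p).re := by
  obtain ⟨e, he, hex, hann, heτ⟩ :=
    hτ.exists_leftSupport_trace_le hp (x := (1 - E) * x) (by rw [mul_assoc, hxp])
  have hEe : E * e = 0 := hann E (by rw [← mul_assoc, hE.mul_one_sub_self, zero_mul])
  have heE : e * E = 0 := by
    simpa [star_mul, he.isSelfAdjoint.star_eq, hE.isSelfAdjoint.star_eq] using congr(star $hEe)
  refine ⟨E + e, hE.add he hEe, by rw [add_mul, heE, add_zero, hE.isIdempotentElem.eq], ?_,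
    by rw [map_add, Complex.add_re]; linarith⟩
  calc (E + e) * x = E * x + e * ((1 - E) * x) + e * E * x := by noncomm_ring
    _ = x := by rw [hex, heE, zero_mul, add_zero]; noncomm_ring

theorem IsFiniteTrace.exists_common_leftSupport_trace_le (hτ : IsFiniteTrace M τ) {p : M}
    (hp : IsStarProjection p) :
    ∀ {n : ℕ} (x : Fin n → M), (∀ i, x i * p = x i) →
      ∃ P : M, IsStarProjection P ∧ (∀ i, P * x i = x i) ∧ (τ P).re ≤ n * (τ p).re
  | 0, _, _ => ⟨0, .zero _, fun i => i.elim0, by simp⟩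
  | n + 1, x, hx => by
    obtain ⟨P, hP, hPx, hPτ⟩ :=
      hτ.exists_common_leftSupport_trace_le hp (fun i => x i.castSucc) fun i => hx _
    obtain ⟨P', hP', hP'P, hP'x, hP'τ⟩ :=
      hτ.exists_enlarge_trace_le_add hP hp (hx (Fin.last n))
    refine ⟨P', hP', Fin.lastCases hP'x fun i => by rw [← hPx i, ← mul_assoc, hP'P], ?_⟩
    push_cast
    linarith

end Trace

section Rank

variable {M : VonNeumannAlgebra H} {τ : M →ₗ[ℂ] ℂ} {L : Type*} [AddCommGroup L]
  [Module (BimodRing M) L]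

-- `mul_smul` itself fails here: instance search takes the `Semigroup` structure of `BimodRing M`
-- from its non-unital semiring structure and then finds no `SemigroupAction` over it.
theorem BimodRing.mul_smul (a b : BimodRing M) (η : L) : (a * b) • η = a • b • η :=
  SemigroupAction.mul_smul (self := MulAction.toSemigroupAction) a b η

theorem rank_le (hτ : IsFiniteTrace M τ) {p q : M} (hp : IsProj M p) (hq : IsProj M q) {η : L}
    (hη : ((1 - p) ⊗ₜ[ℂ] MulOpposite.op (1 - q) : BimodRing M) • η = 0) :
    rank M τ η ≤ (τ p).re + (τ q).re := by
  refine csInf_le ⟨0, ?_⟩ ⟨p, q, hp, hq, hη, rfl⟩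
  rintro _ ⟨p', q', hp', hq', -, rfl⟩
  exact add_nonneg (hτ.re_nonneg (isProj_iff_isStarProjection.mp hp'))
    (hτ.re_nonneg (isProj_iff_isStarProjection.mp hq'))

open scoped Pointwise in
theorem le_mul_rank {c r : ℝ} (hc : 0 ≤ c) {η : L}
    (h : ∀ p q : M, IsProj M p → IsProj M q →
      ((1 - p) ⊗ₜ[ℂ] MulOpposite.op (1 - q) : BimodRing M) • η = 0 →
        r ≤ c * ((τ p).re + (τ q).re)) :
    r ≤ c * rank M τ η := by
  have hne : (c • {r : ℝ | ∃ p q : M, IsProj M p ∧ IsProj M q ∧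
      ((1 - p) ⊗ₜ[ℂ] MulOpposite.op (1 - q) : BimodRing M) • η = 0 ∧
        r = (τ p).re + (τ q).re}).Nonempty :=
    Set.Nonempty.smul_set ⟨_, 1, 1, ⟨star_one _, one_mul 1⟩, ⟨star_one _, one_mul 1⟩,
      by rw [sub_self, TensorProduct.zero_tmul]; exact Module.zero_smul η, rfl⟩
  rw [rank, ← smul_eq_mul, ← Real.sInf_smul_of_nonneg hc]
  refine le_csInf hne ?_
  rintro _ ⟨_, ⟨p, q, hp, hq, hη, rfl⟩, rfl⟩
  exact h p q hp hq hη

theorem tmul_smul_eq_zero {p q : M} {η : L}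
    (hη : ((1 - p) ⊗ₜ[ℂ] MulOpposite.op (1 - q) : BimodRing M) • η = 0) {a b : M}
    (ha : a * p = 0) (hb : q * b = 0) :
    (a ⊗ₜ[ℂ] MulOpposite.op b : BimodRing M) • η = 0 := by
  have hfac : (a ⊗ₜ[ℂ] MulOpposite.op b : BimodRing M) =
      (a ⊗ₜ[ℂ] MulOpposite.op b) * ((1 - p) ⊗ₜ[ℂ] MulOpposite.op (1 - q)) := by
    rw [Algebra.TensorProduct.tmul_mul_tmul, ← MulOpposite.op_mul, mul_sub, mul_one, ha,
      sub_zero, sub_mul, one_mul, hb, sub_zero]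
  rw [hfac, BimodRing.mul_smul, hη, smul_zero]

end Rank

/-- Left multiplication by a sum of `n` elementary tensors is `n`-Lipschitz in the
rank metric: `[ξ • η] ≤ n·[η]`. -/
theorem rank_smul_le_card_mul (M : VonNeumannAlgebra H) (τ : M →ₗ[ℂ] ℂ)
    (hτ : IsFiniteTrace M τ)
    {L : Type*} [AddCommGroup L] [Module (BimodRing M) L]
    (n : ℕ) (a b : Fin n → M) (ξ : BimodRing M)
    (hξ : ξ = ∑ i, a i ⊗ₜ[ℂ] MulOpposite.op (b i)) (η : L) :
    rank M τ (ξ • η) ≤ (n : ℝ) * rank M τ η := by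
  refine le_mul_rank (Nat.cast_nonneg n) fun p q hp hq hη => ?_
  rw [isProj_iff_isStarProjection] at hp hq
  obtain ⟨P, hP, hPa, hPτ⟩ :=
    hτ.exists_common_leftSupport_trace_le hp (fun i => a i * p) fun i => by
      rw [mul_assoc, hp.isIdempotentElem.eq]
  obtain ⟨Q, hQ, hQb, hQτ⟩ :=
    hτ.exists_common_leftSupport_trace_le hq (fun i => star (b i) * q) fun i => by
      rw [mul_assoc, hq.isIdempotentElem.eq]
  have hann : ((1 - P) ⊗ₜ[ℂ] MulOpposite.op (1 - Q) : BimodRing M) • ξ • η = 0 := by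
    rw [← BimodRing.mul_smul, hξ, Finset.mul_sum]
    refine Finset.sum_smul.trans (Finset.sum_eq_zero fun i _ => ?_)
    rw [Algebra.TensorProduct.tmul_mul_tmul, ← MulOpposite.op_mul]
    refine tmul_smul_eq_zero hη ?_ ?_
    · rw [mul_assoc, sub_mul, one_mul, hPa, sub_self]
    · have h : q * b i * Q = q * b i := by
        simpa [star_mul, hq.isSelfAdjoint.star_eq, hQ.isSelfAdjoint.star_eq] using
          congr(star $(hQb i))
      rw [← mul_assoc, mul_sub, mul_one, h, sub_self]
  calc rank M τ (ξ • η) ≤ (τ P).re + (τ Q).re :=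
        rank_le hτ (isProj_iff_isStarProjection.mpr hP) (isProj_iff_isStarProjection.mpr hQ) hann
    _ ≤ n * ((τ p).re + (τ q).re) := by linarith

end RankCompletion
end
end
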